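/- arXiv:2510.18352 — 4 statements merged into one kernel-verified Lean document; each statement's English description precedes it below -/
import Mathlib

section
/- Let H be a class of hypotheses ℕ → {0,1} and L a learner (a function from finite labeled samples and a query point to {0,1}). Suppose that for every h in the closure of H and every enumeration x_0, x_1, … of inputs, L predicts h correctly infinitely often on the sequence (x_t, h(x_t)). Then for every h in the closure of H there exists a finite sample S consistent with h such that the function x ↦ L(S, x) equals h; moreover such S is H-realizable. -/
/-!
If no finite sample consistent with `h` makes the learner output exactly `h`, an adversary can
always extend the current sample by a point on which the learner errs, labelled by `h`; along the
resulting enumeration the learner never predicts `h` correctly, contradicting the hypothesis.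
Realizability comes from the topology: the hypotheses consistent with a finite sample form an
open set of Cantor space, so it meets `H` as soon as it contains a point of `closure H`.
-/

variable {α β : Type*}

def IsConsistent (S : List (α × β)) (h : α → β) : Prop :=
  ∀ p ∈ S, h p.1 = p.2

theorem isConsistent_ofFn (h : α → β) {k : ℕ} (x : Fin k → α) :
    IsConsistent (List.ofFn fun i => (x i, h (x i))) h := by
  simp only [IsConsistent, List.mem_ofFn, forall_exists_index]
  rintro _ i rfl
  rfl

theorem isOpen_setOf_isConsistent [TopologicalSpace β] [DiscreteTopology β]
    (S : List (α × β)) : IsOpen {h : α → β | IsConsistent S h} := by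
  simp only [IsConsistent, Set.ofPred_forall]
  exact S.finite_toSet.isOpen_biInter fun p _ =>
    (isOpen_discrete {p.2}).preimage (continuous_apply (A := fun _ : α => β) p.1)

theorem IsConsistent.exists_mem_of_mem_closure [TopologicalSpace β] [DiscreteTopology β]
    {H : Set (α → β)} {S : List (α × β)} {h : α → β} (hS : IsConsistent S h)
    (hh : h ∈ closure H) : ∃ g ∈ H, IsConsistent S g :=
  let ⟨g, hgS, hgH⟩ := mem_closure_iff.mp hh _ (isOpen_setOf_isConsistent S) hS
  ⟨g, hgH, hgS⟩

noncomputable def adversarialSeq (h : α → β) (bad : ∀ S : List (α × β), IsConsistent S h → α)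
    (k : ℕ) : α :=
  bad (List.ofFn fun i : Fin k => (adversarialSeq h bad i, h (adversarialSeq h bad i)))
    (isConsistent_ofFn h _)
decreasing_by all_goals exact i.2

theorem learner_adversarialSeq_ne (L : List (α × β) → α → β) (h : α → β)
    {bad : ∀ S : List (α × β), IsConsistent S h → α}
    (hbad : ∀ S hS, L S (bad S hS) ≠ h (bad S hS)) (k : ℕ) :
    L (List.ofFn fun i : Fin k => (adversarialSeq h bad i, h (adversarialSeq h bad i)))
      (adversarialSeq h bad k) ≠ h (adversarialSeq h bad k) := by
  rw [adversarialSeq]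
  exact hbad _ _

theorem exists_isConsistent_learner_eq (L : List (α × β) → α → β) (h : α → β)
    (hL : ∀ x : ℕ → α, ∃ k, L (List.ofFn fun i : Fin k => (x i, h (x i))) (x k) = h (x k)) :
    ∃ S, IsConsistent S h ∧ L S = h := by
  by_contra! hc
  choose bad hbad using fun S hS => Function.ne_iff.mp (hc S hS)
  obtain ⟨k, hk⟩ := hL (adversarialSeq h bad)
  exact learner_adversarialSeq_ne L h hbad k hk

/-- Projection Lemma. If a learner `L` predicts every `h` in the closure of `H` correctly
infinitely often along every enumeration of inputs, then for every such `h` there is a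
finite sample `S` consistent with `h` on which `L` outputs exactly `h`; moreover `S` is
`H`-realizable. -/
theorem projection_lemma (H : Set (ℕ → Bool)) (L : List (ℕ × Bool) → ℕ → Bool)
    (hL : ∀ h ∈ closure H, ∀ x : ℕ → ℕ, ∀ N : ℕ, ∃ k ≥ N,
      L (List.ofFn fun i : Fin k => (x i, h (x i))) (x k) = h (x k)) :
    ∀ h ∈ closure H, ∃ S : List (ℕ × Bool),
      (∀ p ∈ S, h p.1 = p.2) ∧ (∀ x : ℕ, L S x = h x) ∧
      ∃ g ∈ H, ∀ p ∈ S, g p.1 = p.2 := by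
  intro h hh
  obtain ⟨S, hS, hLS⟩ :=
    exists_isConsistent_learner_eq L h fun x => (hL h hh x 0).imp fun _ => And.right
  exact ⟨S, hS, congrFun hLS, hS.exists_mem_of_mem_closure hh⟩
end

section
/- Let H be the class of evil sequences as above (one evil sequence per total learner, with pairwise distinct starting indices, evil sequence for index n starting with 0^n 1). Then the closure of H in Cantor space equals H ∪ {0^∞}. -/
/-- For the class `H` of evil sequences (one per total learner, with pairwise distinct
starting indices), the closure of `H` in Cantor space is `H ∪ {0^∞}`. -/
theorem evil_class_closure (φ : ℕ → List (ℕ × Bool) → ℕ → Bool) (n : ℕ → ℕ)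
    (hinj : Function.Injective n) (h : ℕ → ℕ → Bool)
    (hevil : ∀ i : ℕ, (∀ m < n i, h i m = false) ∧ h i (n i) = true ∧
      ∀ k > n i, h i k = !(φ i (List.ofFn fun t : Fin k => (t.1, h i t.1)) k)) :
    closure (Set.range h) = Set.range h ∪ {fun _ => false} := by
  apply Set.Subset.antisymm
  · intro g hg
    by_cases hg0 : g = fun _ => false
    · right; simp [hg0]
    · left
      have hex : ∃ m, g m = true := by
        by_contra hc
        push_neg at hc
        exact hg0 (funext fun k => by simpa using hc k)
      set m := Nat.find hex with hmdef
      have hm : g m = true := Nat.find_spec hex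
      have hmin : ∀ k < m, g k = false := fun k hk => by
        have := Nat.find_min hex hk
        simpa using this
      have key : ∀ L, ∃ i, ∀ k < L, h i k = g k := by
        intro L
        have hU : IsOpen {f : ℕ → Bool | ∀ k < L, f k = g k} := by
          have heq : {f : ℕ → Bool | ∀ k < L, f k = g k}
              = ⋂ k ∈ Finset.range L, (fun f : ℕ → Bool => f k) ⁻¹' {g k} := by
            ext f; simp [Set.mem_iInter]
          rw [heq]
          exact isOpen_biInter_finset fun k _ =>
            (continuous_apply k).isOpen_preimage _ (isOpen_discrete _)
        obtain ⟨f, hfU, i, rfl⟩ := mem_closure_iff.mp hg _ hU (fun k _ => rfl)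
        exact ⟨i, hfU⟩
      have ni_eq : ∀ i, (∀ k < m + 1, h i k = g k) → n i = m := by
        intro i hi
        obtain ⟨h1, h2, _⟩ := hevil i
        by_contra hne
        rcases lt_or_gt_of_ne hne with hlt | hgt
        · have e1 := hi (n i) (by omega)
          have e2 := hmin (n i) hlt
          rw [h2] at e1; rw [e2] at e1; exact Bool.true_eq_false.mp e1
        · have e1 := hi m (by omega)
          have e2 := h1 m hgt
          rw [e2] at e1; rw [hm] at e1; exact Bool.false_ne_true e1
      obtain ⟨i0, hi0⟩ := key (m + 1)
      have hni0 : n i0 = m := ni_eq i0 hi0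
      refine ⟨i0, ?_⟩
      funext j
      obtain ⟨i, hi⟩ := key (max (m + 1) (j + 1))
      have hni : n i = m := ni_eq i fun k hk => hi k (lt_of_lt_of_le hk (le_max_left _ _))
      have : i = i0 := hinj (by rw [hni, hni0])
      rw [← this]
      exact hi j (lt_of_lt_of_le (Nat.lt_succ_self j) (le_max_right _ _))
  · rintro g (⟨i, rfl⟩ | hg)
    · exact subset_closure ⟨i, rfl⟩
    · have hg' : g = fun _ => false := hg
      have hub : ∀ L : ℕ, ∃ i, L ≤ n i := by
        intro L
        have hfin : {i | n i < L}.Finite :=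
          Set.Finite.preimage (Function.Injective.injOn hinj) (Set.finite_Iio L)
        obtain ⟨i, hi⟩ := hfin.infinite_compl.nonempty
        exact ⟨i, not_lt.mp hi⟩
      choose u hu using hub
      apply mem_closure_of_tendsto (f := fun L => h (u L)) (b := Filter.atTop)
      · subst hg'
        rw [tendsto_pi_nhds]
        intro j
        apply Filter.Tendsto.congr' _ tendsto_const_nhds
        filter_upwards [Filter.eventually_ge_atTop (j + 1)] with L hL
        exact ((hevil (u L)).1 j (by have := hu L; omega)).symm
      · exact Filter.Eventually.of_forall fun L => ⟨u L, rfl⟩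
end

section
/- Let Z be a countable set of functions ℕ → {0,1}, enumerated as z_0, z_1, …, and let H be a class with closure(H) ⊆ Z. Define the learner L on a finite sample S and query x by: let i₀ be the least i < |S| such that S is consistent with z_i (or i₀ = |S| if none exists), and output z_{i₀}(x). Then for every H-realizable infinite sequence R = (x_t, y_t)_{t=0}^∞, the learner L makes only finitely many mistakes on R: there exists m such that for all n > m, L((x_t,y_t)_{t=0}^n, x_{n+1}) = y_{n+1}. -/
/-!
By compactness of Cantor space, a sequence whose prefixes are all realized by `H` is realized
entirely by some point of `closure H`, hence by some `z j`; take `j` least. Every `z i` with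
`i < j` is refuted by a finite prefix, so once the sample outgrows `j` and these refutations,
the least consistent index is exactly `j`, and `z j` predicts correctly from then on.
-/

/-- The least-consistent-index learner over an enumeration `z`: on sample `S` and query `x`,
output `z i₀ x` where `i₀` is the least `i < |S|` with `z i` consistent with `S`, or `|S|`
if there is none. -/
noncomputable def leastConsistentLearner (z : ℕ → ℕ → Bool)
    (S : List (ℕ × Bool)) (x : ℕ) : Bool :=
  z (sInf ({i : ℕ | i < S.length ∧ ∀ p ∈ S, z i p.1 = p.2} ∪ {S.length})) x

open Filter

theorem exists_mem_closure_forall_apply_eq {ι β : Type*} [TopologicalSpace β] [T1Space β]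
    [CompactSpace β] {H : Set (ι → β)} {x : ℕ → ι} {y : ℕ → β}
    (h : ∀ n, ∃ g ∈ H, ∀ t ≤ n, g (x t) = y t) : ∃ f ∈ closure H, ∀ t, f (x t) = y t := by
  set K : ℕ → Set (ι → β) := fun n => closure H ∩ {f | ∀ t ≤ n, f (x t) = y t}
  have hK_closed (n : ℕ) : IsClosed (K n) :=
    isClosed_closure.inter <| by
      simp only [Set.ofPred_forall]
      exact isClosed_biInter fun t _ => isClosed_singleton.preimage (continuous_apply (x t))
  have hK_antitone (n : ℕ) : K (n + 1) ⊆ K n := fun f ⟨hfH, hf⟩ =>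
    ⟨hfH, fun t ht => hf t (ht.trans n.le_succ)⟩
  have hK_nonempty (n : ℕ) : (K n).Nonempty := by
    obtain ⟨g, hgH, hg⟩ := h n
    exact ⟨g, subset_closure hgH, hg⟩
  obtain ⟨f, hf⟩ := IsCompact.nonempty_iInter_of_sequence_nonempty_isCompact_isClosed K
    hK_antitone hK_nonempty (hK_closed 0).isCompact hK_closed
  rw [Set.mem_iInter] at hf
  exact ⟨f, (hf 0).1, fun t => (hf t).2 t le_rfl⟩

theorem leastConsistentLearner_eq {z : ℕ → ℕ → Bool} {S : List (ℕ × Bool)} {j : ℕ}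
    (hj : j < S.length) (hcons : ∀ p ∈ S, z j p.1 = p.2)
    (hmin : ∀ i < j, ∃ p ∈ S, z i p.1 ≠ p.2) (q : ℕ) :
    leastConsistentLearner z S q = z j q := by
  have hleast : IsLeast ({i : ℕ | i < S.length ∧ ∀ p ∈ S, z i p.1 = p.2} ∪ {S.length}) j := by
    refine ⟨Or.inl ⟨hj, hcons⟩, ?_⟩
    rintro i (⟨-, hi⟩ | rfl)
    · by_contra! hij
      obtain ⟨p, hpS, hp⟩ := hmin i hij
      exact hp (hi p hpS)
    · exact hj.le
  rw [leastConsistentLearner, hleast.csInf_eq]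

theorem eventually_leastConsistentLearner_eq {z : ℕ → ℕ → Bool} {x : ℕ → ℕ} {y : ℕ → Bool}
    {j : ℕ} (hj : ∀ t, z j (x t) = y t) (hmin : ∀ i < j, ∃ t, z i (x t) ≠ y t) :
    ∀ᶠ n in atTop, ∀ q,
      leastConsistentLearner z (List.ofFn fun t : Fin (n + 1) => (x t, y t)) q = z j q := by
  have hrefuted : ∀ᶠ n in atTop, ∀ i ∈ Finset.range j, ∃ t ≤ n, z i (x t) ≠ y t := by
    refine (eventually_all_finset _).2 fun i hi => ?_
    obtain ⟨t, ht⟩ := hmin i (Finset.mem_range.1 hi)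
    filter_upwards [eventually_ge_atTop t] with n hn using ⟨t, hn, ht⟩
  filter_upwards [hrefuted, eventually_ge_atTop j] with n hn hjn q
  refine leastConsistentLearner_eq ?_ ?_ (fun i hi => ?_) q
  · rw [List.length_ofFn]
    omega
  · exact List.forall_mem_ofFn_iff.2 fun t => hj t
  · obtain ⟨t, htn, ht⟩ := hn i (Finset.mem_range.2 hi)
    exact ⟨(x t, y t), List.mem_ofFn.2 ⟨⟨t, Nat.lt_succ_of_le htn⟩, rfl⟩, ht⟩

/-- If `closure H ⊆ {z_0, z_1, …}`, then the least-consistent-index learner makes only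
finitely many mistakes on every `H`-realizable infinite sequence. -/
theorem least_consistent_learner_learns (H : Set (ℕ → Bool)) (z : ℕ → ℕ → Bool)
    (hZ : closure H ⊆ Set.range z) (x : ℕ → ℕ) (y : ℕ → Bool)
    (hreal : ∀ n : ℕ, ∃ g ∈ H, ∀ t ≤ n, g (x t) = y t) :
    ∃ m : ℕ, ∀ n > m,
      leastConsistentLearner z (List.ofFn fun t : Fin (n + 1) => (x t, y t)) (x (n + 1)) =
        y (n + 1) := by
  classical
  obtain ⟨f, hfH, hf⟩ := exists_mem_closure_forall_apply_eq hreal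
  obtain ⟨j₀, rfl⟩ := hZ hfH
  have hconsistent : ∃ j, ∀ t, z j (x t) = y t := ⟨j₀, hf⟩
  have hmin : ∀ i < Nat.find hconsistent, ∃ t, z i (x t) ≠ y t := fun i hi => by
    simpa using Nat.find_min hconsistent hi
  obtain ⟨m, hm⟩ := eventually_atTop.1
    (eventually_leastConsistentLearner_eq (Nat.find_spec hconsistent) hmin)
  exact ⟨m, fun n hn => (hm n hn.le _).trans (Nat.find_spec hconsistent _)⟩
end

section
/- Let H ⊆ 2^ℕ and suppose the closure of H in Cantor space is countable, with enumeration h_0, h_1, …. Define a learner L on a finite sample S and query x by outputting h_i(x), where i is the least j such that h_j is consistent with S (when such j exists). Then L is a universal online learner for H: on every H-realizable infinite sequence (x_t, y_t), L makes only finitely many mistakes. -/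
/-- The least-consistent-hypothesis learner over an enumeration `h` of the closure:
on sample `S` and query `x`, output `h j x` where `j` is the least index with `h j`
consistent with `S` (defaulting to `0` if none exists). -/
noncomputable def leastConsistentHyp (h : ℕ → ℕ → Bool)
    (S : List (ℕ × Bool)) (x : ℕ) : Bool :=
  h (sInf {j : ℕ | ∀ p ∈ S, h j p.1 = p.2}) x

/-- If the closure of `H` is countable, enumerated as `h_0, h_1, …`, then the
least-consistent-hypothesis learner is a universal online learner for `H`: it makes only
finitely many mistakes on every `H`-realizable infinite sequence. -/
theorem least_consistent_hyp_learns (H : Set (ℕ → Bool)) (h : ℕ → ℕ → Bool)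
    (henum : closure H = Set.range h) (x : ℕ → ℕ) (y : ℕ → Bool)
    (hreal : ∀ n : ℕ, ∃ g ∈ H, ∀ t ≤ n, g (x t) = y t) :
    ∃ m : ℕ, ∀ n > m,
      leastConsistentHyp h (List.ofFn fun t : Fin (n + 1) => (x t, y t)) (x (n + 1)) =
        y (n + 1) := by
  classical
  -- The decreasing family of closed consistent sets inside `closure H`.
  set C : ℕ → Set (ℕ → Bool) := fun n => closure H ∩ {g | ∀ t ≤ n, g (x t) = y t} with hC
  have hclosed : ∀ n, IsClosed (C n) := by
    intro n
    refine isClosed_closure.inter ?_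
    have he : {g : ℕ → Bool | ∀ t ≤ n, g (x t) = y t} =
        ⋂ t ∈ Set.Iic n, {g : ℕ → Bool | g (x t) = y t} := by
      ext g; simp [Set.mem_iInter]
    rw [he]
    refine isClosed_biInter fun t _ => ?_
    have : {g : ℕ → Bool | g (x t) = y t} = (fun g : ℕ → Bool => g (x t)) ⁻¹' {y t} := rfl
    rw [this]
    exact (isClosed_singleton (x := y t)).preimage (continuous_apply (x t))
  have hne : ∀ n, (C n).Nonempty := by
    intro n
    obtain ⟨g, hg, hgc⟩ := hreal n
    exact ⟨g, subset_closure hg, hgc⟩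
  have hanti : ∀ i j, i ≤ j → C j ⊆ C i := by
    intro i j hij g hg
    exact ⟨hg.1, fun t ht => hg.2 t (ht.trans hij)⟩
  have hdir : Directed (· ⊇ ·) C := by
    intro i j
    exact ⟨max i j, hanti i _ (le_max_left _ _), hanti j _ (le_max_right _ _)⟩
  have hcap : (⋂ n, C n).Nonempty :=
    IsCompact.nonempty_iInter_of_directed_nonempty_isCompact_isClosed C hdir hne
      (fun n => (hclosed n).isCompact) hclosed
  obtain ⟨g, hg⟩ := hcap
  have hgcl : g ∈ closure H := (Set.mem_iInter.1 hg 0).1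
  have hgall : ∀ t, g (x t) = y t := fun t => (Set.mem_iInter.1 hg t).2 t le_rfl
  obtain ⟨N, hN⟩ : ∃ N, h N = g := by
    rw [henum] at hgcl; exact hgcl
  -- The consistent index sets and the chosen-index sequence.
  set A : ℕ → Set ℕ := fun n => {j | ∀ t ≤ n, h j (x t) = y t} with hA
  have hNA : ∀ n, N ∈ A n := fun n t _ => by rw [hN]; exact hgall t
  set f : ℕ → ℕ := fun n => sInf (A n) with hf
  have hfmem : ∀ n, f n ∈ A n := fun n => Nat.sInf_mem ⟨N, hNA n⟩
  have hfle : ∀ n, f n ≤ N := fun n => Nat.sInf_le (hNA n)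
  have hmono : Monotone f := by
    intro i j hij
    exact Nat.sInf_le fun t ht => hfmem j t (ht.trans hij)
  -- The bounded monotone sequence stabilizes.
  have hbdd : BddAbove (Set.range f) := ⟨N, by rintro _ ⟨n, rfl⟩; exact hfle n⟩
  obtain ⟨m, hm⟩ : ∃ m, f m = sSup (Set.range f) :=
    Nat.sSup_mem (Set.range_nonempty f) hbdd
  have hstab : ∀ n ≥ m, f n = f m := by
    intro n hn
    exact le_antisymm (hm ▸ le_csSup hbdd ⟨n, rfl⟩) (hmono hn)
  refine ⟨m, fun n hn => ?_⟩
  have hset : {j : ℕ | ∀ p ∈ List.ofFn fun t : Fin (n + 1) => (x t, y t), h j p.1 = p.2}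
      = A n := by
    ext j
    simp only [List.mem_ofFn, Set.mem_setOf_eq, hA]
    constructor
    · intro hj t ht
      exact hj (x t, y t) ⟨⟨t, Nat.lt_succ_of_le ht⟩, rfl⟩
    · rintro hj p ⟨i, rfl⟩
      exact hj i (Nat.lt_succ_iff.1 i.isLt)
  have h1 : f n = f (n + 1) := by
    rw [hstab n hn.le, hstab (n + 1) (hn.le.trans (Nat.le_succ n))]
  have := hfmem (n + 1) (n + 1) le_rfl
  unfold leastConsistentHyp
  rw [hset]
  show h (f n) (x (n + 1)) = y (n + 1)
  rw [h1]
  exact this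
end
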